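/- For every pair (ψ₁, ψ₂) ∈ S(ℝ², ℂ²), the square of the Dirac operator satisfies D(D(ψ₁, ψ₂)) = ((H − 1/2)ψ₁, (H + 1/2)ψ₂); that is, D² = H ⊗ Id₂ + (1/2)·diag(−1, 1) on S(ℝ², ℂ²). -/

import Mathlib

open MeasureTheory Complex
open scoped ENNReal

noncomputable section

/-- `p_x = −i·ħ₀·∂_x`. -/
def pxOp (hb : ℝ) (f : ℝ × ℝ → ℂ) : ℝ × ℝ → ℂ := fun p =>
  -Complex.I * hb * fderiv ℝ f p (1, 0)

/-- `p_y = −i·ħ₀·∂_y`. -/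
def pyOp (hb : ℝ) (f : ℝ × ℝ → ℂ) : ℝ × ℝ → ℂ := fun p =>
  -Complex.I * hb * fderiv ℝ f p (0, 1)

/-- `Π_x = ((1−r)ħ₀B₀/(ħ₀−rθ₀B₀))·y + (((r+s−rs)θ₀B₀−ħ₀)/(rθ₀B₀−ħ₀))·p_x`. -/
def PixOp (hb th B r s : ℝ) (f : ℝ × ℝ → ℂ) : ℝ × ℝ → ℂ := fun p =>
  ((1 - r) * hb * B / (hb - r * th * B)) * p.2 * f p +
    (((r + s - r * s) * th * B - hb) / (r * th * B - hb)) * pxOp hb f p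

/-- `Π_y = −rB₀·x + (1 + r(s−1)θ₀B₀/ħ₀)·p_y`. -/
def PiyOp (hb th B r s : ℝ) (f : ℝ × ℝ → ℂ) : ℝ × ℝ → ℂ := fun p =>
  -(r * B) * p.1 * f p + (1 + r * (s - 1) * th * B / hb) * pyOp hb f p

/-- `Π̃_x = Π_x / √(ħ₀B₀)`. -/
def PixT (hb th B r s : ℝ) (f : ℝ × ℝ → ℂ) : ℝ × ℝ → ℂ := fun p =>
  (Real.sqrt (hb * B))⁻¹ * PixOp hb th B r s f p

/-- `Π̃_y = Π_y / √(ħ₀B₀)`. -/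
def PiyT (hb th B r s : ℝ) (f : ℝ × ℝ → ℂ) : ℝ × ℝ → ℂ := fun p =>
  (Real.sqrt (hb * B))⁻¹ * PiyOp hb th B r s f p

/-- `H = ((Π̃_x)² + (Π̃_y)²)/2`. -/
def Hop (hb th B r s : ℝ) (f : ℝ × ℝ → ℂ) : ℝ × ℝ → ℂ := fun p =>
  (PixT hb th B r s (PixT hb th B r s f) p + PiyT hb th B r s (PiyT hb th B r s f) p) / 2

/-- The Dirac operator on pairs:
`D(ψ₁, ψ₂) = (1/√2)·((Π̃_x − iΠ̃_y)ψ₂, (Π̃_x + iΠ̃_y)ψ₁)`. -/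
def Dirac (hb th B r s : ℝ) (ψ : (ℝ × ℝ → ℂ) × (ℝ × ℝ → ℂ)) :
    (ℝ × ℝ → ℂ) × (ℝ × ℝ → ℂ) :=
  (fun p => (PixT hb th B r s ψ.2 p - Complex.I * PiyT hb th B r s ψ.2 p) / Real.sqrt 2,
   fun p => (PixT hb th B r s ψ.1 p + Complex.I * PiyT hb th B r s ψ.1 p) / Real.sqrt 2)

/-! Both `Π̃_x` and `Π̃_y` are first-order differential operators with linear coefficients, and the
commutator of two such operators `ℓ + ∂_w` and `ℓ' + ∂_{w'}` is the constant `ℓ'(w) - ℓ(w')`, the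
second-order parts cancelling by symmetry of the second derivative. For `Π̃_x, Π̃_y` this constant
is `i`, so `a⁺a⁻ = H - 1/2` and `a⁻a⁺ = H + 1/2` by expanding the products; since
`D(ψ₁, ψ₂) = (a⁺ψ₂, a⁻ψ₁)`, this is the claim. -/

section FirstOrderOp

variable {E : Type*} [NormedAddCommGroup E] [NormedSpace ℝ E] {X Y : (E → ℂ) → E → ℂ}
  {f g h : E → ℂ}

/-- The operator `f ↦ ℓ·f + ∂_w f` for the complex vector field `w = u + i v`. -/
def firstOrderOp (ℓ : E →L[ℝ] ℂ) (u v : E) (f : E → ℂ) : E → ℂ := fun q =>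
  ℓ q * f q + fderiv ℝ f q u + I * fderiv ℝ f q v

def IsFirstOrderOp (X : (E → ℂ) → E → ℂ) : Prop :=
  ∃ (ℓ : E →L[ℝ] ℂ) (u v : E), X = firstOrderOp ℓ u v

theorem contDiff_firstOrderOp (ℓ : E →L[ℝ] ℂ) (u v : E) {n : WithTop ℕ∞}
    (hf : ContDiff ℝ (n + 1) f) : ContDiff ℝ n (firstOrderOp ℓ u v f) := by
  have hDf : ContDiff ℝ n (fderiv ℝ f) := hf.fderiv_right le_rfl
  exact ((ℓ.contDiff.mul (hf.of_le le_self_add)).add (hDf.clm_apply contDiff_const)).add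
    (contDiff_const.mul (hDf.clm_apply contDiff_const))

theorem firstOrderOp_linear_comb (ℓ : E →L[ℝ] ℂ) (u v : E) (hg : Differentiable ℝ g)
    (hh : Differentiable ℝ h) (α β : ℂ) :
    firstOrderOp ℓ u v (fun q => α * g q + β * h q) =
      fun q => α * firstOrderOp ℓ u v g q + β * firstOrderOp ℓ u v h q := by
  funext q
  have hD : HasFDerivAt (fun q => α * g q + β * h q) _ q :=
    ((hg q).hasFDerivAt.const_mul α).add ((hh q).hasFDerivAt.const_mul β)
  simp only [firstOrderOp, hD.fderiv, add_apply, smul_apply, smul_eq_mul]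
  ring

theorem fderiv_firstOrderOp (ℓ : E →L[ℝ] ℂ) (u v : E) (hf : ContDiff ℝ 2 f) (q w : E) :
    fderiv ℝ (firstOrderOp ℓ u v f) q w =
      ℓ w * f q + ℓ q * fderiv ℝ f q w + fderiv ℝ (fderiv ℝ f) q w u +
        I * fderiv ℝ (fderiv ℝ f) q w v := by
  have hf₁ : HasFDerivAt f (fderiv ℝ f q) q :=
    (hf.differentiable (by norm_num) q).hasFDerivAt
  have hf₂ : HasFDerivAt (fderiv ℝ f) (fderiv ℝ (fderiv ℝ f) q) q :=
    ((hf.fderiv_right (m := 1) (by norm_num)).differentiable (by norm_num) q).hasFDerivAt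
  have H : HasFDerivAt (firstOrderOp ℓ u v f) _ q :=
    ((ℓ.hasFDerivAt.mul hf₁).add (hf₂.clm_apply (hasFDerivAt_const u q))).add
      ((hf₂.clm_apply (hasFDerivAt_const v q)).const_mul I)
  rw [H.fderiv]
  simp only [ContinuousLinearMap.comp_zero, zero_add, add_apply, smul_apply, smul_eq_mul,
    ContinuousLinearMap.flip_apply]
  ring

theorem firstOrderOp_commutator (ℓ ℓ' : E →L[ℝ] ℂ) (u v u' v' : E) (hf : ContDiff ℝ 2 f)
    (q : E) :
    firstOrderOp ℓ u v (firstOrderOp ℓ' u' v' f) q -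
        firstOrderOp ℓ' u' v' (firstOrderOp ℓ u v f) q =
      (ℓ' u + I * ℓ' v - ℓ u' - I * ℓ v') * f q := by
  have hsymm : IsSymmSndFDerivAt ℝ f q := hf.contDiffAt.isSymmSndFDerivAt (by simp)
  simp only [firstOrderOp, fderiv_firstOrderOp _ _ _ hf]
  rw [hsymm u u', hsymm u v', hsymm v u', hsymm v v']
  ring

namespace IsFirstOrderOp

theorem contDiff (hX : IsFirstOrderOp X) {n : WithTop ℕ∞} (hf : ContDiff ℝ (n + 1) f) :
    ContDiff ℝ n (X f) := by
  obtain ⟨ℓ, u, v, rfl⟩ := hX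
  exact contDiff_firstOrderOp ℓ u v hf

theorem linear_comb (hX : IsFirstOrderOp X) (hg : Differentiable ℝ g)
    (hh : Differentiable ℝ h) (α β : ℂ) :
    X (fun q => α * g q + β * h q) = fun q => α * X g q + β * X h q := by
  obtain ⟨ℓ, u, v, rfl⟩ := hX
  exact firstOrderOp_linear_comb ℓ u v hg hh α β

end IsFirstOrderOp

def annihilation (X Y : (E → ℂ) → E → ℂ) (f : E → ℂ) : E → ℂ := fun p =>
  (X f p + I * Y f p) / Real.sqrt 2

def creation (X Y : (E → ℂ) → E → ℂ) (f : E → ℂ) : E → ℂ := fun p =>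
  (X f p - I * Y f p) / Real.sqrt 2

/-- With `σ = 1` and `σ = -1` this gives `a⁺a⁻` and `a⁻a⁺`. -/
theorem ladder_comp_ladder (σ : ℂ) (hX : IsFirstOrderOp X) (hY : IsFirstOrderOp Y)
    (hf : ContDiff ℝ 2 f) (hcomm : ∀ q, X (Y f) q - Y (X f) q = I * f q) :
    (fun p => (X (fun q => (X f q + σ * I * Y f q) / Real.sqrt 2) p -
      σ * I * Y (fun q => (X f q + σ * I * Y f q) / Real.sqrt 2) p) / Real.sqrt 2) =
      fun p => (X (X f) p + σ ^ 2 * Y (Y f) p) / 2 - σ / 2 * f p := by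
  have hXf : Differentiable ℝ (X f) := (hX.contDiff (n := 1) hf).differentiable one_ne_zero
  have hYf : Differentiable ℝ (Y f) := (hY.contDiff (n := 1) hf).differentiable one_ne_zero
  have hinv : ((Real.sqrt 2 : ℂ)⁻¹) ^ 2 = 1 / 2 := by
    rw [inv_pow, ← Complex.ofReal_pow, Real.sq_sqrt zero_le_two]; norm_num
  have hcomb : (fun q => (X f q + σ * I * Y f q) / Real.sqrt 2) =
      fun q => (Real.sqrt 2 : ℂ)⁻¹ * X f q + (Real.sqrt 2 : ℂ)⁻¹ * (σ * I) * Y f q := by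
    funext q; ring
  funext p
  rw [hcomb, hX.linear_comb hXf hYf, hY.linear_comb hXf hYf]
  linear_combination (σ * I * (Real.sqrt 2 : ℂ)⁻¹ ^ 2) * hcomm p +
    ((Real.sqrt 2 : ℂ)⁻¹ ^ 2 * (σ * f p - σ ^ 2 * Y (Y f) p)) * I_sq +
    (X (X f) p + σ ^ 2 * Y (Y f) p - σ * f p) * hinv

theorem creation_annihilation (hX : IsFirstOrderOp X) (hY : IsFirstOrderOp Y)
    (hf : ContDiff ℝ 2 f) (hcomm : ∀ q, X (Y f) q - Y (X f) q = I * f q) :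
    creation X Y (annihilation X Y f) = fun p => (X (X f) p + Y (Y f) p) / 2 - 1 / 2 * f p := by
  have h := ladder_comp_ladder 1 hX hY hf hcomm
  simp only [one_mul, one_pow] at h
  exact h

theorem annihilation_creation (hX : IsFirstOrderOp X) (hY : IsFirstOrderOp Y)
    (hf : ContDiff ℝ 2 f) (hcomm : ∀ q, X (Y f) q - Y (X f) q = I * f q) :
    annihilation X Y (creation X Y f) = fun p => (X (X f) p + Y (Y f) p) / 2 + 1 / 2 * f p := by
  have h := ladder_comp_ladder (-1) hX hY hf hcomm
  simp only [neg_mul, one_mul, neg_one_sq, neg_div, ← sub_eq_add_neg, sub_neg_eq_add] at h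
  exact h

end FirstOrderOp

theorem PixT_eq_firstOrderOp (hb th B r s : ℝ) :
    PixT hb th B r s = firstOrderOp
      (((Real.sqrt (hb * B))⁻¹ * ((1 - r) * hb * B / (hb - r * th * B))) •
        (ofRealCLM ∘L ContinuousLinearMap.snd ℝ ℝ ℝ)) 0
      ((-((Real.sqrt (hb * B))⁻¹ * hb *
        (((r + s - r * s) * th * B - hb) / (r * th * B - hb)))) • ((1 : ℝ), (0 : ℝ))) := by
  funext f p
  simp only [PixT, PixOp, pxOp, firstOrderOp, map_smul, map_zero, add_zero, smul_apply,
    ContinuousLinearMap.comp_apply, ContinuousLinearMap.coe_snd', ofRealCLM_apply, real_smul]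
  push_cast
  ring

theorem PiyT_eq_firstOrderOp (hb th B r s : ℝ) :
    PiyT hb th B r s = firstOrderOp
      ((-((Real.sqrt (hb * B))⁻¹ * r * B)) • (ofRealCLM ∘L ContinuousLinearMap.fst ℝ ℝ ℝ)) 0
      ((-((Real.sqrt (hb * B))⁻¹ * hb * (1 + r * (s - 1) * th * B / hb))) •
        ((0 : ℝ), (1 : ℝ))) := by
  funext f p
  simp only [PiyT, PiyOp, pyOp, firstOrderOp, map_smul, map_zero, add_zero, smul_apply,
    ContinuousLinearMap.comp_apply, ContinuousLinearMap.coe_fst', ofRealCLM_apply, real_smul]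
  push_cast
  ring

theorem PixT_PiyT_commutator {hb th B r s : ℝ} (hrs : r * th * B ≠ hb) (hpos : 0 < hb * B)
    {f : ℝ × ℝ → ℂ} (hf : ContDiff ℝ 2 f) (q : ℝ × ℝ) :
    PixT hb th B r s (PiyT hb th B r s f) q - PiyT hb th B r s (PixT hb th B r s f) q =
      I * f q := by
  rw [PixT_eq_firstOrderOp, PiyT_eq_firstOrderOp, firstOrderOp_commutator _ _ _ _ _ _ hf]
  congr 1
  have hhb : hb ≠ 0 := left_ne_zero_of_mul hpos.ne'
  have hB : B ≠ 0 := right_ne_zero_of_mul hpos.ne'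
  have hD : hb - r * th * B ≠ 0 := sub_ne_zero.mpr (Ne.symm hrs)
  -- the commutator constant divided by `i`; it is `1` because `(r + s - rs) - (1 - r)(s - 1) = 1`
  have key : (Real.sqrt (hb * B))⁻¹ * r * B * ((Real.sqrt (hb * B))⁻¹ * hb *
        (((r + s - r * s) * th * B - hb) / (r * th * B - hb))) +
      (Real.sqrt (hb * B))⁻¹ * ((1 - r) * hb * B / (hb - r * th * B)) *
        ((Real.sqrt (hb * B))⁻¹ * hb * (1 + r * (s - 1) * th * B / hb)) = 1 := by
    calc _ = (Real.sqrt (hb * B))⁻¹ ^ 2 * (hb * (r * B *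
          (((r + s - r * s) * th * B - hb) / (r * th * B - hb)) +
          (1 - r) * hb * B / (hb - r * th * B) * (1 + r * (s - 1) * th * B / hb))) := by ring
      _ = 1 := by
        rw [inv_pow, Real.sq_sqrt hpos.le, show r * th * B - hb = -(hb - r * th * B) by ring,
          div_neg]
        field_simp
        rw [div_eq_one_iff_eq fun h => hD (by linear_combination h)]
        ring
  have hkey := congrArg (fun x : ℝ => (x : ℂ)) key
  push_cast at hkey
  simp only [map_zero, smul_apply, ContinuousLinearMap.comp_apply, ContinuousLinearMap.coe_fst',
    ContinuousLinearMap.coe_snd', ofRealCLM_apply, Prod.smul_mk, smul_eq_mul, mul_one, mul_zero,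
    real_smul]
  push_cast
  linear_combination I * hkey

theorem isFirstOrderOp_PixT (hb th B r s : ℝ) : IsFirstOrderOp (PixT hb th B r s) :=
  ⟨_, _, _, PixT_eq_firstOrderOp hb th B r s⟩

theorem isFirstOrderOp_PiyT (hb th B r s : ℝ) : IsFirstOrderOp (PiyT hb th B r s) :=
  ⟨_, _, _, PiyT_eq_firstOrderOp hb th B r s⟩

theorem stmt14_general (hb th B r s : ℝ) (hrs : r * th * B ≠ hb) (hpos : 0 < hb * B) :
    ∀ ψ₁ ψ₂ : SchwartzMap (ℝ × ℝ) ℂ,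
      Dirac hb th B r s (Dirac hb th B r s (⇑ψ₁, ⇑ψ₂)) =
        (fun p => Hop hb th B r s ⇑ψ₁ p - (1 / 2) * ψ₁ p,
         fun p => Hop hb th B r s ⇑ψ₂ p + (1 / 2) * ψ₂ p) := by
  intro ψ₁ ψ₂
  have hX := isFirstOrderOp_PixT hb th B r s
  have hY := isFirstOrderOp_PiyT hb th B r s
  exact Prod.ext
    (creation_annihilation hX hY (ψ₁.smooth 2) (PixT_PiyT_commutator hrs hpos (ψ₁.smooth 2)))
    (annihilation_creation hX hY (ψ₂.smooth 2) (PixT_PiyT_commutator hrs hpos (ψ₂.smooth 2)))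

theorem stmt14 (hb th B r s : ℝ) (hhb : hb ≠ 0) (hth : th ≠ 0) (hB : B ≠ 0)
    (hnd : hb - th * B ≠ 0) (hrs : r * th * B ≠ hb) (hpos : 0 < hb * B) :
    ∀ ψ₁ ψ₂ : SchwartzMap (ℝ × ℝ) ℂ,
      Dirac hb th B r s (Dirac hb th B r s (⇑ψ₁, ⇑ψ₂)) =
        (fun p => Hop hb th B r s ⇑ψ₁ p - (1 / 2) * ψ₁ p,
         fun p => Hop hb th B r s ⇑ψ₂ p + (1 / 2) * ψ₂ p) :=
  stmt14_general hb th B r s hrs hpos
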